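/- arXiv:2603.27398 — 6 statements merged into one kernel-verified Lean document; each statement's English description precedes it below -/
import Mathlib

section
/- Let q be a prime, and let T⁺ and T⁻ be disjoint finite multisets of elements of 𝔽_q with |T⁺| + |T⁻| < q, such that |T⁺| ≡ |T⁻| (mod q) and for every j with 1 ≤ j ≤ k−1 the j-th power sums agree: ∑_{a∈T⁺} a^j = ∑_{a∈T⁻} a^j in 𝔽_q. If |T⁺| + |T⁻| < 2k, then both multisets are empty. -/
/-!
The two multisets have the same size `m`, since their sizes are congruent modulo `q` and both
below `q`; and `m < k`. Newton's identities express `j • e_j` through `e_0, …, e_{j-1}` and the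
power sums `p_1, …, p_j`; as `1, …, m` are invertible in `𝔽_q`, agreement of the power sums
up to degree `m` forces agreement of the elementary symmetric functions up to degree `m`.
Then `∏ (X - a)` is the same polynomial for both multisets, so they are equal, and being
disjoint they are empty.
-/

open Finset Polynomial

namespace Multiset

variable {R : Type*} [CommRing R]

theorem mul_esymm_eq_sum (s : Multiset R) (k : ℕ) :
    (k : R) * s.esymm k = (-1) ^ (k + 1) *
      ∑ a ∈ HasAntidiagonal.antidiagonal k with a.1 < k,
        (-1) ^ a.1 * s.esymm a.1 * (s.map (· ^ a.2)).sum := by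
  classical
  have hpsum (n : ℕ) : ∑ x : s, (x : R) ^ n = (s.map (· ^ n)).sum := congrArg sum (map_univ s _)
  have h := congrArg (MvPolynomial.aeval fun x : s => (x : R)) (MvPolynomial.mul_esymm_eq_sum s R k)
  simpa only [map_mul, map_natCast, map_pow, map_neg, map_one, map_sum, MvPolynomial.psum,
    MvPolynomial.aeval_X, MvPolynomial.aeval_esymm_eq_multiset_esymm, map_univ_coe, hpsum] using h

theorem esymm_eq_of_sum_map_pow_eq {s t : Multiset R} {n : ℕ}
    (hunit : ∀ j, 0 < j → j ≤ n → IsUnit (j : R))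
    (hpow : ∀ j, 0 < j → j ≤ n → (s.map (· ^ j)).sum = (t.map (· ^ j)).sum) :
    ∀ j ≤ n, s.esymm j = t.esymm j := by
  intro j
  induction j using Nat.strong_induction_on with
  | _ j ih =>
    intro hjn
    rcases Nat.eq_zero_or_pos j with rfl | hj
    · simp [esymm, powersetCard_zero_left]
    refine (hunit j hj hjn).mul_left_cancel ?_
    rw [mul_esymm_eq_sum, mul_esymm_eq_sum]
    congr 1
    refine Finset.sum_congr rfl fun a ha => ?_
    obtain ⟨hsum, hlt⟩ := Finset.mem_filter.mp ha
    rw [HasAntidiagonal.mem_antidiagonal] at hsum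
    rw [ih a.1 hlt (by omega), hpow a.2 (by omega) (by omega)]

theorem eq_of_card_eq_of_esymm_eq [IsDomain R] {s t : Multiset R} (hcard : card s = card t)
    (hesymm : ∀ j ≤ card s, s.esymm j = t.esymm j) : s = t := by
  have hprod : (s.map fun a => X - C a).prod = (t.map fun a => X - C a).prod := by
    ext n
    rcases le_or_gt n (card s) with hn | hn
    · rw [prod_X_sub_C_coeff s hn, prod_X_sub_C_coeff t (hcard ▸ hn), hesymm _ (by omega),
        hcard]
    · rw [coeff_eq_zero_of_natDegree_lt, coeff_eq_zero_of_natDegree_lt] <;>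
        rw [natDegree_multiset_prod_X_sub_C_eq_card] <;> omega
  simpa using congrArg roots hprod

end Multiset

theorem stmt_0_general (q k : ℕ) (hq : q.Prime)
    (T₁ T₂ : Multiset (ZMod q))
    (hdisj : Disjoint T₁ T₂)
    (hcard : Multiset.card T₁ + Multiset.card T₂ < q)
    (hmod : Multiset.card T₁ ≡ Multiset.card T₂ [MOD q])
    (hpow : ∀ j : ℕ, 1 ≤ j → j ≤ k - 1 →
      (T₁.map (fun a => a ^ j)).sum = (T₂.map (fun a => a ^ j)).sum)
    (hlt : Multiset.card T₁ + Multiset.card T₂ < 2 * k) :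
    T₁ = 0 ∧ T₂ = 0 := by
  have := Fact.mk hq
  have hcard_eq : Multiset.card T₁ = Multiset.card T₂ := hmod.eq_of_lt_of_lt (by omega) (by omega)
  have hunit : ∀ j, 0 < j → j ≤ Multiset.card T₁ → IsUnit (j : ZMod q) := fun j hj hjm =>
    Ne.isUnit fun h => by
      have := Nat.le_of_dvd hj ((ZMod.natCast_eq_zero_iff j q).mp h)
      omega
  have hT : T₁ = T₂ := Multiset.eq_of_card_eq_of_esymm_eq hcard_eq
    (Multiset.esymm_eq_of_sum_map_pow_eq hunit fun j hj hjm => hpow j hj (by omega))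
  subst hT
  exact ⟨disjoint_self.mp hdisj, disjoint_self.mp hdisj⟩

theorem stmt_0 (q k : ℕ) (hq : q.Prime) (hk : 0 < k) (hkq : 2 * k ≤ q)
    (T₁ T₂ : Multiset (ZMod q))
    (hdisj : Disjoint T₁ T₂)
    (hcard : Multiset.card T₁ + Multiset.card T₂ < q)
    (hmod : Multiset.card T₁ ≡ Multiset.card T₂ [MOD q])
    (hpow : ∀ j : ℕ, 1 ≤ j → j ≤ k - 1 →
      (T₁.map (fun a => a ^ j)).sum = (T₂.map (fun a => a ^ j)).sum)
    (hlt : Multiset.card T₁ + Multiset.card T₂ < 2 * k) :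
    T₁ = 0 ∧ T₂ = 0 :=
  stmt_0_general q k hq T₁ T₂ hdisj hcard hmod hpow hlt
end

section
/- Let q be a prime and 1 < k ≤ q/2. Define the Reed–Solomon lattice L_{q,k} = { v ∈ ℤ^q : for all 0 ≤ j ≤ k−1, ∑_{i=1}^q v_i a_i^j ≡ 0 (mod q) }, where a_1,…,a_q is an enumeration of 𝔽_q. Then for every nonzero v ∈ L_{q,k}, the ℓ₁-norm satisfies ‖v‖₁ ≥ 2k. -/
/-!
Split `v` into its positive and negative parts and read them as multisets `S`, `T` of points of
`𝔽_q`, of sizes `P` and `N`; the congruences say that `S` and `T` have the same power sums in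
degrees `< k`. The degree-`0` congruence and `P + N < 2k ≤ q` force `P = N < k`.

For `f = ∏_{x ∈ S} (X - x)` and `g = ∏_{x ∈ T} (X - x)` the Wronskian `g f' - g' f` equals
`f g · ∑_x (mult_S x - mult_T x) / (X - x)`; expanding `1 / (X - x)` in powers of `1 / X` shows that
its coefficients vanish in all degrees `≥ 2P - k`. If `f ≠ g`, write `g = f + r` with
`ρ = deg r < P`: the coefficient of `X ^ (P - 1 + ρ)` in the Wronskian is `(P - ρ) · lc r`, which is
nonzero because `0 < P - ρ < q`. Hence `f = g`, so `S = T` and `v = 0`.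
-/

open Finset

namespace Polynomial

variable {R : Type*} [CommRing R]

noncomputable def prodXSubC (s : Multiset R) : R[X] := (s.map fun x => X - C x).prod

theorem isMonicOfDegree_prodXSubC [Nontrivial R] (s : Multiset R) :
    IsMonicOfDegree (prodXSubC s) s.card :=
  ⟨natDegree_multiset_prod_X_sub_C_eq_card s,
    monic_multiset_prod_of_monic _ _ fun x _ => monic_X_sub_C x⟩

theorem roots_prodXSubC [IsDomain R] (s : Multiset R) : (prodXSubC s).roots = s :=
  roots_multiset_prod_X_sub_C s

theorem prodXSubC_eq_X_sub_C_mul [DecidableEq R] {s : Multiset R} {x : R} (hx : x ∈ s) :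
    prodXSubC s = (X - C x) * prodXSubC (s.erase x) := by
  rw [prodXSubC, prodXSubC, ← Multiset.prod_cons, ← Multiset.map_cons (fun x => X - C x),
    Multiset.cons_erase hx]

theorem derivative_prodXSubC_mul (s : Multiset R) (g : R[X]) :
    derivative (prodXSubC s) * g = (s.map fun x => prodXSubC s * g /ₘ (X - C x)).sum := by
  classical
  conv_lhs => rw [prodXSubC, derivative_prod, ← Multiset.sum_map_mul_right]
  refine congrArg _ (Multiset.map_congr rfl fun x hx => ?_)
  rw [prodXSubC_eq_X_sub_C_mul hx, mul_assoc (X - C x),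
    mul_divByMonic_cancel_left _ (monic_X_sub_C x), derivative_X_sub_C, mul_one, prodXSubC]

theorem wronskian_prodXSubC (s t : Multiset R) :
    wronskian (prodXSubC t) (prodXSubC s) =
      (s.map fun x => prodXSubC s * prodXSubC t /ₘ (X - C x)).sum -
        (t.map fun x => prodXSubC s * prodXSubC t /ₘ (X - C x)).sum := by
  rw [wronskian, ← derivative_prodXSubC_mul, mul_comm (prodXSubC s), ← derivative_prodXSubC_mul,
    mul_comm (prodXSubC t)]

theorem coeff_sum_map_divByMonic_X_sub_C (s : Multiset R) (p : R[X]) (m : ℕ) :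
    (s.map fun x => p /ₘ (X - C x)).sum.coeff m =
      ∑ i ∈ Icc (m + 1) p.natDegree, (s.map (· ^ (i - (m + 1)))).sum * p.coeff i := by
  rw [← lcoeff_apply, map_multiset_sum, Multiset.map_map]
  simp only [Function.comp_def, lcoeff_apply, coeff_divByMonic_X_sub_C, sum_eq_multiset_sum,
    ← Multiset.sum_map_mul_right]
  exact Multiset.sum_map_sum_map _ _

theorem coeff_wronskian_prodXSubC_eq_zero {s t : Multiset R} {k m : ℕ}
    (hpow : ∀ j < k, (s.map (· ^ j)).sum = (t.map (· ^ j)).sum)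
    (hdeg : (prodXSubC s * prodXSubC t).natDegree ≤ m + k) :
    (wronskian (prodXSubC t) (prodXSubC s)).coeff m = 0 := by
  rw [wronskian_prodXSubC, coeff_sub, coeff_sum_map_divByMonic_X_sub_C,
    coeff_sum_map_divByMonic_X_sub_C, ← sum_sub_distrib]
  refine sum_eq_zero fun i hi => ?_
  rw [hpow _ (by grind), sub_self]

theorem coeff_derivative_natDegree_sub_one (p : R[X]) :
    (derivative p).coeff (p.natDegree - 1) = p.natDegree * p.leadingCoeff := by
  rcases Nat.eq_zero_or_pos p.natDegree with h | h
  · rw [eq_C_of_natDegree_eq_zero h]; simp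
  · rw [coeff_derivative, Nat.sub_add_cancel h, Nat.cast_pred h, sub_add_cancel, mul_comm,
      coeff_natDegree]

theorem coeff_wronskian_of_monic {f : R[X]} (hf : f.Monic) (hf0 : 0 < f.natDegree) (r : R[X]) :
    (wronskian r f).coeff (f.natDegree - 1 + r.natDegree) =
      ((f.natDegree : R) - r.natDegree) * r.leadingCoeff := by
  have hrf' : (r * derivative f).coeff (f.natDegree - 1 + r.natDegree) =
      f.natDegree * r.leadingCoeff := by
    rw [add_comm, coeff_mul_add_eq_of_natDegree_le le_rfl (natDegree_derivative_le f),
      coeff_derivative_natDegree_sub_one, hf.leadingCoeff, mul_one, mul_comm, coeff_natDegree]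
  have hr'f : (derivative r * f).coeff (f.natDegree - 1 + r.natDegree) =
      r.natDegree * r.leadingCoeff := by
    rcases Nat.eq_zero_or_pos r.natDegree with h | h
    · rw [eq_C_of_natDegree_eq_zero h]; simp
    · rw [show f.natDegree - 1 + r.natDegree = r.natDegree - 1 + f.natDegree by omega,
        coeff_mul_add_eq_of_natDegree_le (natDegree_derivative_le r) le_rfl,
        coeff_derivative_natDegree_sub_one, hf.coeff_natDegree, mul_one]
  rw [wronskian, coeff_sub, hrf', hr'f, sub_mul]

end Polynomial

open Polynomial

theorem Multiset.eq_of_sum_map_pow_eq {F : Type*} [Field F] {c : ℕ} [CharP F c]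
    {s t : Multiset F} {k : ℕ} (hcard : s.card = t.card) (hk : s.card < k) (hkc : k ≤ c)
    (hpow : ∀ j < k, (s.map (· ^ j)).sum = (t.map (· ^ j)).sum) : s = t := by
  by_contra hst
  have hd : s.card ≠ 0 := fun h => hst <| by
    rw [Multiset.card_eq_zero.mp h, Multiset.card_eq_zero.mp (hcard.symm.trans h)]
  have hf := isMonicOfDegree_prodXSubC s
  have hg : IsMonicOfDegree (prodXSubC t) s.card := hcard ▸ isMonicOfDegree_prodXSubC t
  set r := prodXSubC t - prodXSubC s
  have hr : r ≠ 0 := sub_ne_zero.mpr fun h => hst <| by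
    rw [← roots_prodXSubC s, ← h, roots_prodXSubC]
  have hrd : r.natDegree < s.card := hg.natDegree_sub_lt hd hf
  have hW : wronskian (prodXSubC t) (prodXSubC s) = wronskian r (prodXSubC s) := by
    rw [← sub_add_cancel (prodXSubC t) (prodXSubC s), wronskian_add_left, wronskian_self_eq_zero,
      add_zero]
  have hzero : (wronskian (prodXSubC t) (prodXSubC s)).coeff (s.card - 1 + r.natDegree) = 0 :=
    coeff_wronskian_prodXSubC_eq_zero hpow (by rw [(hf.mul hg).natDegree_eq]; omega)
  have hcoeff := coeff_wronskian_of_monic hf.monic (hf.natDegree_eq ▸ Nat.pos_of_ne_zero hd) r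
  rw [← hW, hf.natDegree_eq, hzero, eq_comm, ← Nat.cast_sub hrd.le] at hcoeff
  refine mul_ne_zero ?_ (leadingCoeff_ne_zero.mpr hr) hcoeff
  rw [Ne, CharP.cast_eq_zero_iff F c]
  exact fun hdvd => (Nat.le_of_dvd (by omega) hdvd).not_gt (by omega)

section

variable {ι α : Type*} [Fintype ι]

theorem Multiset.count_sum_nsmul_singleton [DecidableEq α] {a : ι → α}
    (ha : Function.Injective a) (e : ι → ℕ) (i : ι) :
    (∑ j, e j • {a j} : Multiset α).count (a i) = e i := by
  rw [Multiset.count_sum', sum_eq_single i (fun j _ hji => by simp [ha.ne hji.symm]) (by simp)]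
  simp

theorem Multiset.sum_map_sum_nsmul_singleton {M : Type*} [AddCommMonoid M] (f : α → M)
    (a : ι → α) (e : ι → ℕ) :
    ((∑ j, e j • {a j} : Multiset α).map f).sum = ∑ j, e j • f (a j) := by
  rw [← Multiset.coe_mapAddMonoidHom, map_sum, ← Multiset.coe_sumAddMonoidHom, map_sum]
  simp [Multiset.map_nsmul, Multiset.sum_nsmul]

end

theorem stmt_1_general (q k : ℕ) (hq : q.Prime) (hkq : 2 * k ≤ q)
    (a : Fin q → ZMod q) (ha : Function.Bijective a)
    (v : Fin q → ℤ) (hv : v ≠ 0)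
    (hmem : ∀ j : ℕ, j ≤ k - 1 → ∑ i, (v i : ZMod q) * a i ^ j = 0) :
    2 * k ≤ ∑ i, |v i| := by
  have : Fact q.Prime := ⟨hq⟩
  by_contra! hsmall
  set s : Multiset (ZMod q) := ∑ i, (v i).toNat • {a i}
  set t : Multiset (ZMod q) := ∑ i, (-v i).toNat • {a i}
  have hpow : ∀ j ≤ k - 1, (s.map (· ^ j)).sum = (t.map (· ^ j)).sum := by
    intro j hj
    rw [← sub_eq_zero, ← hmem j hj, Multiset.sum_map_sum_nsmul_singleton,
      Multiset.sum_map_sum_nsmul_singleton, ← sum_sub_distrib]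
    refine sum_congr rfl fun i _ => ?_
    rw [nsmul_eq_mul, nsmul_eq_mul, ← sub_mul]
    exact_mod_cast congrArg (fun n : ℤ => (n : ZMod q) * a i ^ j) (Int.toNat_sub_toNat_neg (v i))
  have hcard : (s.card + t.card : ℤ) = ∑ i, |v i| := by
    simp only [s, t, Multiset.card_sum, Multiset.card_nsmul, Multiset.card_singleton, mul_one,
      Nat.cast_sum, Int.ofNat_toNat, ← sum_add_distrib, max_zero_add_max_neg_zero_eq_abs_self]
  have hcard_eq : s.card = t.card := by
    have h0 := hpow 0 (Nat.zero_le _)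
    simp only [pow_zero, Multiset.map_const', Multiset.sum_replicate, nsmul_one,
      ZMod.natCast_eq_natCast_iff'] at h0
    rwa [Nat.mod_eq_of_lt (by omega), Nat.mod_eq_of_lt (by omega)] at h0
  have hst : s = t := Multiset.eq_of_sum_map_pow_eq (c := q) (k := k) hcard_eq (by omega)
    (by omega) fun j hj => hpow j (by omega)
  refine hv (funext fun i => ?_)
  have hi := congrArg (Multiset.count (a i)) hst
  rw [Multiset.count_sum_nsmul_singleton ha.injective,
    Multiset.count_sum_nsmul_singleton ha.injective] at hi
  rw [Pi.zero_apply]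
  omega

theorem stmt_1 (q k : ℕ) (hq : q.Prime) (hk : 1 < k) (hkq : 2 * k ≤ q)
    (a : Fin q → ZMod q) (ha : Function.Bijective a)
    (v : Fin q → ℤ) (hv : v ≠ 0)
    (hmem : ∀ j : ℕ, j ≤ k - 1 → ∑ i, (v i : ZMod q) * a i ^ j = 0) :
    2 * k ≤ ∑ i, |v i| :=
  stmt_1_general q k hq hkq a ha v hv hmem
end

section
/- Let q be a prime and 2 ≤ k ≤ h < q. The projective variety X̄_{k,h} ⊂ ℙ^{h−1} over 𝔽_q defined by the equations ∑_{i=1}^h x_i^j = 0 for 1 ≤ j ≤ k−1 is smooth, i.e., has no singular points: at every point of the variety, the (k−1) × h Jacobian matrix with rows ((j x_1^{j−1}, …, j x_h^{j−1}))_{1 ≤ j ≤ k−1} has rank k−1. -/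
/-!
Columns of the Jacobian at coordinates with pairwise distinct values form a Vandermonde matrix
times `diagonal (1, …, k - 1)`, which is invertible as `k - 1 < q`; so it suffices that `x` takes
at least `k - 1` distinct values. Grouping equal coordinates turns the equations `∑ xᵢʲ = 0`,
`1 ≤ j ≤ k - 1`, into a Vandermonde system in the distinct values `z` with unknowns `m z * z`,
where `m z` is the multiplicity of `z`. With at most `k - 1` distinct values this system is
nonsingular, so `m z * z = 0`, and `0 < m z ≤ h < q` forces `z = 0` for every value: `x = 0`.
-/

open Finset Matrix

lemma CharP.natCast_ne_zero_of_lt {K : Type*} [AddMonoidWithOne K] (p : ℕ) [CharP K p] {n : ℕ}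
    (hn : 0 < n) (hnp : n < p) : (n : K) ≠ 0 := fun h =>
  hn.ne' (Nat.eq_zero_of_dvd_of_lt ((CharP.cast_eq_zero_iff K p n).1 h) hnp)

theorem Finset.eq_zero_of_forall_sum_mul_pow_eq_zero {K : Type*} [Field K] {s : Finset K}
    {c : K → K} (hc : ∀ j < #s, ∑ z ∈ s, c z * z ^ j = 0) : ∀ z ∈ s, c z = 0 := by
  let w : Fin #s → K := fun i => s.equivFin.symm i
  have hw : Function.Injective w := Subtype.val_injective.comp s.equivFin.symm.injective
  have hcw : (fun i => c (w i)) = 0 := by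
    refine eq_zero_of_forall_pow_sum_mul_pow_eq_zero hw fun j => ?_
    rw [← hc j j.isLt, ← s.sum_coe_sort]
    exact s.equivFin.symm.sum_comp fun z : s => c z * (z : K) ^ (j : ℕ)
  intro z hz
  simpa [w] using congr_fun hcw (s.equivFin ⟨z, hz⟩)

theorem lt_card_image_of_forall_sum_pow_eq_zero {K ι : Type*} [Field K] [Fintype ι]
    [DecidableEq K] (p : ℕ) [CharP K p] (hιp : Fintype.card ι < p) {x : ι → K} (hx : x ≠ 0)
    {n : ℕ} (hsum : ∀ j : ℕ, 1 ≤ j → j ≤ n → ∑ i, x i ^ j = 0) :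
    n < #(univ.image x) := by
  by_contra! hle
  have hweight : ∀ z ∈ univ.image x, (#{i | x i = z} : K) * z = 0 := by
    refine eq_zero_of_forall_sum_mul_pow_eq_zero fun j hj => ?_
    simp_rw [mul_assoc, ← pow_succ']
    rw [← hsum (j + 1) (by omega) (by omega), sum_comp (fun z => z ^ (j + 1)) x]
    simp only [nsmul_eq_mul]
  refine hx (funext fun i => ?_)
  have hmult : (#{t | x t = x i} : K) ≠ 0 :=
    CharP.natCast_ne_zero_of_lt p (card_pos.2 ⟨i, by simp⟩)
      ((card_le_univ _).trans_lt hιp)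
  exact (mul_eq_zero.1 (hweight (x i) (mem_image_of_mem x (mem_univ i)))).resolve_left hmult

theorem Matrix.rank_of_pow_eq_of_le_card_image {K ι : Type*} [Field K] [Fintype ι]
    [DecidableEq K] {x : ι → K} {n : ℕ} (hn : n ≤ #(univ.image x)) :
    (of fun (j : Fin n) i => x i ^ (j : ℕ)).rank = n := by
  let y : Fin n → K := fun j => (univ.image x).equivFin.symm (Fin.castLE hn j)
  have hy : Function.Injective y := Subtype.val_injective.comp <|
    (univ.image x).equivFin.symm.injective.comp (Fin.castLE_injective hn)
  obtain ⟨g, hg⟩ : ∃ g : Fin n → ι, x ∘ g = y := by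
    choose g hg using fun j => mem_image.1 ((univ.image x).equivFin.symm (Fin.castLE hn j)).2
    exact ⟨g, funext fun j => (hg j).2⟩
  have hsub : (of fun (j : Fin n) i => x i ^ (j : ℕ)).submatrix id g = (vandermonde y)ᵀ := by
    ext j t; simp [← hg]
  refine le_antisymm ((rank_le_card_height _).trans_eq (Fintype.card_fin n)) ?_
  calc n = (vandermonde y)ᵀ.rank := by
        rw [rank_transpose, rank_of_isUnit _ ((isUnit_iff_isUnit_det _).2
          (det_vandermonde_ne_zero_iff.2 hy).isUnit), Fintype.card_fin]
    _ ≤ _ := hsub ▸ rank_submatrix_le _ _ _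

theorem Matrix.rank_of_succ_mul_pow_eq_of_le_card_image {K ι : Type*} [Field K] [Fintype ι]
    [DecidableEq K] (p : ℕ) [CharP K p] {x : ι → K} {n : ℕ} (hn : n ≤ #(univ.image x))
    (hnp : n < p) :
    (of fun (j : Fin n) i => ((j : ℕ) + 1 : K) * x i ^ (j : ℕ)).rank = n := by
  have hfactor : (of fun (j : Fin n) i => ((j : ℕ) + 1 : K) * x i ^ (j : ℕ)) =
      diagonal (fun j : Fin n => ((j : ℕ) + 1 : K)) *
        of fun (j : Fin n) i => x i ^ (j : ℕ) := by
    ext j i; simp [diagonal_mul]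
  rw [hfactor, rank_mul_eq_right_of_det_ne_zero _ _ ?_, rank_of_pow_eq_of_le_card_image hn]
  rw [det_diagonal, prod_ne_zero_iff]
  exact fun j _ => mod_cast CharP.natCast_ne_zero_of_lt p j.succ_pos (by omega)

theorem stmt_6_general (q k h : ℕ) [Fact q.Prime] (hhq : h < q)
    (x : Fin h → AlgebraicClosure (ZMod q)) (hx : x ≠ 0)
    (hsol : ∀ j : ℕ, 1 ≤ j → j ≤ k - 1 → ∑ i, x i ^ j = 0) :
    (Matrix.of fun (j : Fin (k - 1)) (i : Fin h) =>
      ((j : ℕ) + 1 : AlgebraicClosure (ZMod q)) * x i ^ (j : ℕ)).rank = k - 1 := by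
  classical
  have hdistinct := lt_card_image_of_forall_sum_pow_eq_zero q (by simpa using hhq) hx hsol
  refine rank_of_succ_mul_pow_eq_of_le_card_image q hdistinct.le ?_
  calc k - 1 < #(univ.image x) := hdistinct
    _ ≤ h := by simpa using card_image_le (s := univ) (f := x)
    _ < q := hhq

theorem stmt_6 (q k h : ℕ) [Fact q.Prime] (hk : 2 ≤ k) (hkh : k ≤ h) (hhq : h < q)
    (x : Fin h → AlgebraicClosure (ZMod q)) (hx : x ≠ 0)
    (hsol : ∀ j : ℕ, 1 ≤ j → j ≤ k - 1 → ∑ i, x i ^ j = 0) :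
    (Matrix.of fun (j : Fin (k - 1)) (i : Fin h) =>
      ((j : ℕ) + 1 : AlgebraicClosure (ZMod q)) * x i ^ (j : ℕ)).rank = k - 1 :=
  stmt_6_general q k h hhq x hx hsol
end

section
/- Let α_1,…,α_{d_1}, β_1,…,β_{d_2} be complex numbers and suppose there is a constant C and real B > 0 such that for all positive integers e, |∑_{j=1}^{d_2} β_j^e − ∑_{i=1}^{d_1} α_i^e| ≤ C · B^e. If the rational function ∑_j 1/(1−β_j T) − ∑_i 1/(1−α_i T) is written in lowest terms (no common factors between numerator and denominator after cancellation), then every α_i and every β_j appearing satisfies |α_i| ≤ B and |β_j| ≤ B. -/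
/-!
Write `s n = ∑ β_j ^ n - ∑ α_i ^ n` as `∑ c_γ γ ^ n` over the distinct values `γ`; since no `α_i`
equals a `β_j`, each `c_γ` is a nonzero signed multiplicity. For a fixed `γ₀`, the polynomial
`P = ∏_{γ ≠ γ₀} (X - γ)` applied to the shift operator kills every `γ ^ n` except `γ₀ ^ n` and
preserves the bound `O(B ^ n)`, so `c_γ₀ P(γ₀) γ₀ ^ n = O(B ^ n)`, which forces `‖γ₀‖ ≤ B`.
-/

open Asymptotics Filter Finset Polynomial

section

variable {𝕜 : Type*} [NormedField 𝕜]

theorem norm_le_of_isBigO_pow {γ : 𝕜} {B : ℝ} (hB : 0 ≤ B)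
    (h : (fun n : ℕ ↦ γ ^ n) =O[atTop] fun n ↦ B ^ n) : ‖γ‖ ≤ B := by
  by_contra! hlt
  have hγ : γ ≠ 0 := norm_pos_iff.1 (hB.trans_lt hlt)
  have hsmall : (fun n : ℕ ↦ γ ^ n) =o[atTop] fun n ↦ ‖γ ^ n‖ := by
    simpa only [norm_pow] using h.trans_isLittleO (isLittleO_pow_pow_of_lt_left hB hlt)
  exact isLittleO_irrefl (.of_forall fun n ↦ pow_ne_zero n hγ) (isLittleO_norm_right.1 hsmall)

theorem isBigO_pow_comp_add_nat {s : ℕ → 𝕜} {B : ℝ}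
    (h : s =O[atTop] fun n ↦ B ^ n) (m : ℕ) :
    (fun n ↦ s (n + m)) =O[atTop] fun n ↦ B ^ n := by
  refine (h.comp_tendsto (tendsto_add_atTop_nat m)).trans ?_
  simpa only [Function.comp_def, pow_add, mul_comm _ (B ^ m)] using
    (isBigO_refl (fun n : ℕ ↦ B ^ n) atTop).const_mul_left (B ^ m)

theorem sum_coeff_mul_sum_mul_pow_add (P : 𝕜[X]) (G : Finset 𝕜) (c : 𝕜 → 𝕜) (n : ℕ) :
    ∑ m ∈ range (P.natDegree + 1), P.coeff m * ∑ γ ∈ G, c γ * γ ^ (n + m)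
      = ∑ γ ∈ G, c γ * P.eval γ * γ ^ n := by
  simp_rw [mul_sum, eval_eq_sum_range, mul_sum, sum_mul]
  rw [sum_comm]
  refine sum_congr rfl fun γ _ ↦ sum_congr rfl fun m _ ↦ ?_
  ring

theorem norm_le_of_isBigO_sum_mul_pow {G : Finset 𝕜} {c : 𝕜 → 𝕜} (hc : ∀ γ ∈ G, c γ ≠ 0)
    {B : ℝ} (hB : 0 ≤ B) (h : (fun n ↦ ∑ γ ∈ G, c γ * γ ^ n) =O[atTop] fun n ↦ B ^ n)
    {γ₀ : 𝕜} (hγ₀ : γ₀ ∈ G) : ‖γ₀‖ ≤ B := by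
  classical
  set P : 𝕜[X] := ∏ γ ∈ G.erase γ₀, (X - C γ)
  have hPγ₀ : P.eval γ₀ ≠ 0 := by
    simp only [P, eval_prod, eval_sub, eval_X, eval_C, prod_ne_zero_iff, mem_erase, ne_eq,
      sub_eq_zero]
    exact fun γ hγ ↦ Ne.symm hγ.1
  have hkill (n : ℕ) : ∑ m ∈ range (P.natDegree + 1), P.coeff m * ∑ γ ∈ G, c γ * γ ^ (n + m)
      = c γ₀ * P.eval γ₀ * γ₀ ^ n := by
    rw [sum_coeff_mul_sum_mul_pow_add]
    refine sum_eq_single γ₀ (fun γ hγ hne ↦ ?_) (absurd hγ₀)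
    have hPγ : P.eval γ = 0 := by
      simp only [P, eval_prod]
      exact prod_eq_zero (mem_erase.2 ⟨hne, hγ⟩) (by simp)
    rw [hPγ, mul_zero, zero_mul]
  have hO : (fun n ↦ c γ₀ * P.eval γ₀ * γ₀ ^ n) =O[atTop] fun n ↦ B ^ n := by
    simp_rw [← hkill]
    exact IsBigO.fun_sum fun m _ ↦ (isBigO_pow_comp_add_nat h m).const_mul_left _
  exact norm_le_of_isBigO_pow hB ((isBigO_const_mul_left_iff (mul_ne_zero (hc γ₀ hγ₀) hPγ₀)).1 hO)

theorem norm_le_of_isBigO_fintype_sum_mul_pow [CharZero 𝕜] {ι : Type*} [Fintype ι]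
    {z w : ι → 𝕜} (hw₀ : ∀ i, w i ≠ 0) (hw : ∀ i j, z i = z j → w i = w j)
    {B : ℝ} (hB : 0 ≤ B) (h : (fun n ↦ ∑ i, w i * z i ^ n) =O[atTop] fun n ↦ B ^ n) (i : ι) :
    ‖z i‖ ≤ B := by
  classical
  set c : 𝕜 → 𝕜 := fun γ ↦ ∑ j ∈ univ.filter (z · = γ), w j
  have hsum (n : ℕ) : ∑ i, w i * z i ^ n = ∑ γ ∈ univ.image z, c γ * γ ^ n := by
    rw [← sum_fiberwise_of_maps_to (g := z) (t := univ.image z)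
      fun j _ ↦ mem_image_of_mem z (mem_univ j)]
    refine sum_congr rfl fun γ _ ↦ ?_
    rw [sum_mul]
    exact sum_congr rfl fun j hj ↦ by rw [(mem_filter.1 hj).2]
  have hc : ∀ γ ∈ univ.image z, c γ ≠ 0 := by
    intro γ hγ
    obtain ⟨j, -, rfl⟩ := mem_image.1 hγ
    have hfiber : c (z j) = (univ.filter (z · = z j)).card * w j := by
      rw [← nsmul_eq_mul, ← sum_const]
      exact sum_congr rfl fun k hk ↦ hw k j (mem_filter.1 hk).2
    rw [hfiber]
    exact mul_ne_zero (Nat.cast_ne_zero.2 (card_pos.2 ⟨j, by simp⟩).ne') (hw₀ j)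
  exact norm_le_of_isBigO_sum_mul_pow hc hB (by simpa only [hsum] using h)
    (mem_image_of_mem z (mem_univ i))

end

theorem stmt_10 (d₁ d₂ : ℕ) (α : Fin d₁ → ℂ) (β : Fin d₂ → ℂ)
    (C B : ℝ) (hB : 0 < B)
    (hbound : ∀ e : ℕ, 1 ≤ e →
      ‖∑ j, β j ^ e - ∑ i, α i ^ e‖ ≤ C * B ^ e)
    (hlowest : ∀ i j, α i ≠ β j) :
    (∀ i, ‖α i‖ ≤ B) ∧ (∀ j, ‖β j‖ ≤ B) := by
  set z : Fin d₂ ⊕ Fin d₁ → ℂ := Sum.elim β α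
  set w : Fin d₂ ⊕ Fin d₁ → ℂ := Sum.elim (fun _ ↦ 1) (fun _ ↦ -1)
  have hsum (e : ℕ) : ∑ j, β j ^ e - ∑ i, α i ^ e = ∑ k, w k * z k ^ e := by
    simp [z, w, Fintype.sum_sum_type, sub_eq_add_neg]
  have hw : ∀ k l, z k = z l → w k = w l := by
    rintro (j | i) (j' | i') h <;> simp_all [z, w, Ne.symm]
  have hO : (fun e ↦ ∑ k, w k * z k ^ e) =O[atTop] fun e ↦ B ^ e := by
    refine IsBigO.of_bound C (eventually_atTop.2 ⟨1, fun e he ↦ ?_⟩)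
    rw [← hsum, Real.norm_of_nonneg (by positivity)]
    exact hbound e he
  have hz := norm_le_of_isBigO_fintype_sum_mul_pow (by rintro (_ | _) <;> simp [w]) hw hB.le hO
  exact ⟨fun i ↦ hz (.inr i), fun j ↦ hz (.inl j)⟩
end

section
/- Let q be a prime, k, h positive integers with k ≤ h < q, and let y ∈ {0,1}^q have Hamming weight h. For each binary vector x ∈ {0,1}^q of Hamming weight h with H_q(k) x ≡ H_q(k) y (mod q), define f_x(t) = ∏_{i : x_i = 1} (t − a_i) ∈ 𝔽_q[t]. Then f_y(t) − f_x(t) is a polynomial of degree at most h − k; in particular its evaluation vector on 𝔽_q is a codeword of the Reed–Solomon code RS_q(h−k+1), and this codeword agrees with the evaluation vector of f_y at all h roots of f_x, so their Hamming distance is at most q − h. -/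
/-!
Newton's identities express each elementary symmetric function `e_j` of the roots through the
power sums `p_1, …, p_j`, dividing by `j` at every step; since `j < q` is invertible in `𝔽_q`,
equal power sums below `k` force `e_j(S) = e_j(T)` for `j < k`. By Vieta these are, up to sign,
the coefficients of `t^h, …, t^(h-k+1)` in `f_x` and `f_y`, so `f_y - f_x` has degree `≤ h - k`.
It agrees with `f_y` on the `h` roots of `f_x`, hence can differ from it at most `q - h` times.
-/

open Polynomial Finset

namespace Finset

variable {ι R : Type*} [CommRing R]

theorem sum_pow_eq_mul_esymm_sub_sum (s : Finset ι) (a : ι → R) {j : ℕ} (hj : 0 < j) :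
    ∑ i ∈ s, a i ^ j = (-1) ^ (j + 1) * j * (s.val.map a).esymm j -
      ∑ p ∈ antidiagonal j with p.1 ∈ Set.Ioo 0 j,
        (-1) ^ p.1 * (s.val.map a).esymm p.1 * ∑ i ∈ s, a i ^ p.2 := by
  have aeval_esymm (n : ℕ) :
      MvPolynomial.aeval (fun i : s ↦ a i) (MvPolynomial.esymm s R n) = (s.val.map a).esymm n := by
    rw [MvPolynomial.aeval_esymm_eq_multiset_esymm, univ_eq_attach, attach_val]
    exact congrArg (Multiset.esymm · n) (Multiset.attach_map_val' s.val a)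
  have aeval_psum (n : ℕ) :
      MvPolynomial.aeval (fun i : s ↦ a i) (MvPolynomial.psum s R n) = ∑ i ∈ s, a i ^ n := by
    simp only [MvPolynomial.psum, map_sum, map_pow, MvPolynomial.aeval_X]
    exact sum_coe_sort s fun i ↦ a i ^ n
  simpa only [map_sub, map_mul, map_sum, map_pow, map_neg, map_one, map_natCast, aeval_esymm,
    aeval_psum] using congrArg (MvPolynomial.aeval fun i : s ↦ a i)
      (MvPolynomial.psum_eq_mul_esymm_sub_sum s R j hj)

theorem esymm_map_eq_of_sum_pow_eq [IsDomain R] (s t : Finset ι) (a : ι → R) {n : ℕ}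
    (hchar : ∀ j, 0 < j → j < n → (j : R) ≠ 0)
    (hpow : ∀ j < n, ∑ i ∈ s, a i ^ j = ∑ i ∈ t, a i ^ j) :
    ∀ j < n, (s.val.map a).esymm j = (t.val.map a).esymm j := by
  intro j
  induction j using Nat.strong_induction_on with
  | _ j ih =>
  intro hjn
  rcases Nat.eq_zero_or_pos j with rfl | hj
  · simp [Multiset.esymm]
  have hlower : ∑ p ∈ antidiagonal j with p.1 ∈ Set.Ioo 0 j,
        (-1) ^ p.1 * (s.val.map a).esymm p.1 * ∑ i ∈ s, a i ^ p.2 =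
      ∑ p ∈ antidiagonal j with p.1 ∈ Set.Ioo 0 j,
        (-1) ^ p.1 * (t.val.map a).esymm p.1 * ∑ i ∈ t, a i ^ p.2 := by
    refine sum_congr rfl fun p hp ↦ ?_
    rw [mem_filter, HasAntidiagonal.mem_antidiagonal, Set.mem_Ioo] at hp
    rw [ih p.1 hp.2.2 (by omega), hpow p.2 (by omega)]
  have htop := hpow j hjn
  rw [sum_pow_eq_mul_esymm_sub_sum s a hj, sum_pow_eq_mul_esymm_sub_sum t a hj, hlower,
    sub_left_inj] at htop
  exact mul_left_cancel₀ (mul_ne_zero (pow_ne_zero _ (neg_ne_zero.mpr one_ne_zero))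
    (hchar j hj hjn)) htop

end Finset

theorem Polynomial.degree_multiset_prod_X_sub_C_sub_le {R : Type*} [CommRing R] [Nontrivial R]
    {s t : Multiset R} {h n : ℕ} (hs : Multiset.card s = h) (ht : Multiset.card t = h)
    (hesymm : ∀ j < n, s.esymm j = t.esymm j) :
    ((t.map fun r ↦ X - C r).prod - (s.map fun r ↦ X - C r).prod).degree ≤
      ((h - n : ℕ) : WithBot ℕ) := by
  rw [degree_le_iff_coeff_zero]
  intro m hm
  have hm : h - n < m := by exact_mod_cast hm
  rw [coeff_sub, sub_eq_zero]
  by_cases hmh : m ≤ h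
  · rw [Multiset.prod_X_sub_C_coeff _ (ht ▸ hmh), Multiset.prod_X_sub_C_coeff _ (hs ▸ hmh), hs,
      ht, hesymm _ (by omega)]
  · rw [coeff_eq_zero_of_natDegree_lt, coeff_eq_zero_of_natDegree_lt] <;>
      rw [natDegree_multiset_prod_X_sub_C_eq_card] <;> omega

theorem stmt_16_general (q k h : ℕ) [Fact q.Prime] (hhq : h < q)
    (a : Fin q → ZMod q)
    (S T : Finset (Fin q)) (hScard : S.card = h) (hTcard : T.card = h)
    (hsyn : ∀ j : ℕ, j ≤ k - 1 → ∑ i ∈ S, a i ^ j = ∑ i ∈ T, a i ^ j)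
    (fx fy : Polynomial (ZMod q))
    (hfx : fx = ∏ i ∈ S, (X - C (a i)))
    (hfy : fy = ∏ i ∈ T, (X - C (a i))) :
    (fy - fx).degree ≤ ((h - k : ℕ) : WithBot ℕ) ∧
    (fun i : Fin q => (fy - fx).eval (a i)) ∈
      {w : Fin q → ZMod q | ∃ g : Polynomial (ZMod q),
        g.degree < ((h - k + 1 : ℕ) : WithBot ℕ) ∧ ∀ i, w i = g.eval (a i)} ∧
    (∀ i ∈ S, (fy - fx).eval (a i) = fy.eval (a i)) ∧
    (Finset.univ.filter fun i : Fin q =>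
      (fy - fx).eval (a i) ≠ fy.eval (a i)).card ≤ q - h := by
  have hesymm := esymm_map_eq_of_sum_pow_eq S T a (n := min k q)
    (fun j hj hjn hzero ↦ by
      have := Nat.le_of_dvd hj ((ZMod.natCast_eq_zero_iff j q).mp hzero); omega)
    (fun j hj ↦ hsyn j (by omega))
  have hdeg : (fy - fx).degree ≤ ((h - k : ℕ) : WithBot ℕ) := by
    have := degree_multiset_prod_X_sub_C_sub_le (by simpa) (by simpa) hesymm
    rwa [Multiset.map_map, Multiset.map_map, Function.comp_def, prod_map_val,
      prod_map_val, ← hfx, ← hfy, show h - min k q = h - k by omega] at this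
  have hagree : ∀ i ∈ S, (fy - fx).eval (a i) = fy.eval (a i) := fun i hi ↦ by
    rw [eval_sub, hfx, eval_prod, prod_eq_zero hi (by simp), sub_zero]
  refine ⟨hdeg, ⟨fy - fx, hdeg.trans_lt (by exact_mod_cast (h - k).lt_succ_self), fun _ ↦ rfl⟩,
    hagree, ?_⟩
  calc #{i | (fy - fx).eval (a i) ≠ fy.eval (a i)} ≤ #Sᶜ :=
        card_le_card fun i hi ↦ mem_compl.mpr fun hiS ↦ (mem_filter.mp hi).2 (hagree i hiS)
    _ = q - h := by rw [card_compl, hScard, Fintype.card_fin]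

theorem stmt_16 (q k h : ℕ) [Fact q.Prime] (hk : 1 ≤ k) (hkh : k ≤ h) (hhq : h < q)
    (a : Fin q → ZMod q) (ha : Function.Bijective a)
    (S T : Finset (Fin q)) (hScard : S.card = h) (hTcard : T.card = h)
    (hsyn : ∀ j : ℕ, j ≤ k - 1 → ∑ i ∈ S, a i ^ j = ∑ i ∈ T, a i ^ j)
    (fx fy : Polynomial (ZMod q))
    (hfx : fx = ∏ i ∈ S, (X - C (a i)))
    (hfy : fy = ∏ i ∈ T, (X - C (a i))) :
    (fy - fx).degree ≤ ((h - k : ℕ) : WithBot ℕ) ∧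
    (fun i : Fin q => (fy - fx).eval (a i)) ∈
      {w : Fin q → ZMod q | ∃ g : Polynomial (ZMod q),
        g.degree < ((h - k + 1 : ℕ) : WithBot ℕ) ∧ ∀ i, w i = g.eval (a i)} ∧
    (∀ i ∈ S, (fy - fx).eval (a i) = fy.eval (a i)) ∧
    (Finset.univ.filter fun i : Fin q =>
      (fy - fx).eval (a i) ≠ fy.eval (a i)).card ≤ q - h :=
  stmt_16_general q k h hhq a S T hScard hTcard hsyn fx fy hfx hfy
end

section
/- Let q be a prime and 2 ≤ k ≤ h < q. If a point (x_1, …, x_h) ∈ 𝔽̄_q^h (over an algebraic closure) has at most k−2 distinct coordinate values, with at least one nonzero coordinate, and satisfies ∑_{i=1}^h x_i^j = 0 for all 1 ≤ j ≤ k−1, then a contradiction arises; i.e., no such point exists provided h < q. -/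
/-!
Group equal coordinates: for `j ≥ 1` the power sum `∑ xᵢ ^ j` equals `∑ m_z z ^ j` over the
distinct nonzero values `z`, where `m_z` is the multiplicity of `z`. There are at most `k - 2`
such `z`, so the vanishing of the first `k - 1` power sums is a Vandermonde system in the `m_z`,
which forces every `m_z = 0` in the field. But `0 < m_z ≤ h < q`, so `m_z` is nonzero in
characteristic `q`.
-/

open scoped Classical

open Finset

/- Multiplying the coefficients by `z` shifts the exponents `1, …, #s` down to `0, …, #s - 1`,
where the Vandermonde determinant applies; `z ≠ 0` then recovers `c z = 0`. -/
theorem Finset.eq_zero_of_forall_sum_mul_pow_succ_eq_zero {R : Type*} [CommRing R] [IsDomain R]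
    {s : Finset R} (hs : (0 : R) ∉ s) {c : R → R}
    (hc : ∀ j < #s, ∑ z ∈ s, c z * z ^ (j + 1) = 0) : ∀ z ∈ s, c z = 0 := by
  let e := s.equivFin.symm
  have hcz : (fun k => c (e k) * e k) = 0 :=
    Matrix.eq_zero_of_forall_pow_sum_mul_pow_eq_zero (Subtype.val_injective.comp e.injective)
      fun j => by
        rw [← hc j j.2, ← s.sum_coe_sort, ← e.sum_comp]
        simp only [pow_succ', mul_assoc, Function.comp_apply]
  intro z hz
  have hz0 : z ≠ 0 := fun h => hs (h ▸ hz)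
  simpa [e, hz0] using congrFun hcz (s.equivFin ⟨z, hz⟩)

theorem Finset.sum_pow_eq_sum_card_fiber_mul_pow {K : Type*} [CommSemiring K] [DecidableEq K]
    {ι : Type*} [Fintype ι] (x : ι → K) {j : ℕ} (hj : j ≠ 0) :
    ∑ i, x i ^ j = ∑ z ∈ {z ∈ univ.image x | z ≠ 0}, (#{i | x i = z} : K) * z ^ j := by
  rw [sum_comp (· ^ j) x, sum_filter_of_ne]
  · simp only [nsmul_eq_mul]
  · rintro z - hz rfl
    simp [zero_pow hj] at hz

theorem stmt_19_general (q k h : ℕ) [Fact q.Prime] (hhq : h < q)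
    (x : Fin h → AlgebraicClosure (ZMod q))
    (hdist : (Finset.univ.image x).card ≤ k - 2)
    (hnz : ∃ i, x i ≠ 0)
    (hsol : ∀ j : ℕ, 1 ≤ j → j ≤ k - 1 → ∑ i, x i ^ j = 0) :
    False := by
  set T := {z ∈ univ.image x | z ≠ 0}
  have hT : #T ≤ k - 2 := (card_filter_le _ _).trans hdist
  have hmult : ∀ z ∈ T, (#{i | x i = z} : AlgebraicClosure (ZMod q)) = 0 :=
    eq_zero_of_forall_sum_mul_pow_succ_eq_zero (by simp [T]) fun j hj => by
      rw [← sum_pow_eq_sum_card_fiber_mul_pow x j.succ_ne_zero]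
      exact hsol _ j.succ_pos (by omega)
  obtain ⟨i, hi⟩ := hnz
  have hq : q ∣ #{j | x j = x i} :=
    (CharP.cast_eq_zero_iff _ q _).1 (hmult (x i) (by simp [T, hi]))
  have hpos : 0 < #{j | x j = x i} := card_pos.2 ⟨i, by simp⟩
  have hle : #{j | x j = x i} ≤ h := (card_filter_le _ _).trans (by simp)
  have := Nat.le_of_dvd hpos hq
  omega

theorem stmt_19 (q k h : ℕ) [Fact q.Prime] (hk : 2 ≤ k) (hkh : k ≤ h) (hhq : h < q)
    (x : Fin h → AlgebraicClosure (ZMod q))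
    (hdist : (Finset.univ.image x).card ≤ k - 2)
    (hnz : ∃ i, x i ≠ 0)
    (hsol : ∀ j : ℕ, 1 ≤ j → j ≤ k - 1 → ∑ i, x i ^ j = 0) :
    False :=
  stmt_19_general q k h hhq x hdist hnz hsol
end
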